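/- Let M, λ, K > 0, B ≥ 0, and let x : ℝ≥0 → ℝ≥0 be continuous and u : ℝ≥0 → ℝ≥0 be continuous, satisfying for all t ≥ 0: x(t) ≤ M e^{−λt} x(0) + ∫₀ᵗ M e^{−λ(t−r)} (B·u(r) + K·x(r)·ξ(u(r))) dr, where ξ : ℝ≥0 → ℝ≥0 is continuous. Then for all t ≥ 0, x(t) ≤ M (e^{−λt} x(0) + B ∫₀ᵗ u(r) dr) · exp(∫₀ᵗ M K ξ(u(r)) dr). -/
import Mathlib


open intervalIntegral

private lemma ftc_cont {f : ℝ → ℝ} (hf : Continuous f) (t : ℝ) :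
    HasDerivAt (fun s => ∫ r in (0:ℝ)..s, f r) (f t) t :=
  intervalIntegral.integral_hasDerivAt_right (hf.intervalIntegrable 0 t)
    (hf.aestronglyMeasurable.stronglyMeasurableAtFilter) hf.continuousAt

private lemma gronwall_int (g f : ℝ → ℝ) (hg : Continuous g) (hf : Continuous f)
    (hgpos : ∀ t, 0 ≤ g t) (a T : ℝ) (ha : 0 ≤ a) (hT : 0 ≤ T)
    (h : ∀ t ∈ Set.Icc (0:ℝ) T, f t ≤ a + ∫ r in (0:ℝ)..t, g r * f r) :
    f T ≤ a * Real.exp (∫ r in (0:ℝ)..T, g r) := by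
  set G : ℝ → ℝ := fun t => ∫ r in (0:ℝ)..t, g r with hG
  set F : ℝ → ℝ := fun t => ∫ r in (0:ℝ)..t, g r * f r with hF
  have hGd : ∀ t, HasDerivAt G (g t) t := ftc_cont hg
  have hFd : ∀ t, HasDerivAt F (g t * f t) t := ftc_cont (hg.mul hf)
  set φ : ℝ → ℝ := fun t => (a + F t) * Real.exp (-G t) with hφ
  have hφd : ∀ t, HasDerivAt φ
      (g t * f t * Real.exp (-G t) + (a + F t) * (Real.exp (-G t) * -g t)) t := by
    intro t
    exact ((hFd t).const_add a).mul (((hGd t).neg).exp)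
  have hanti : AntitoneOn φ (Set.Icc 0 T) := by
    apply antitoneOn_of_deriv_nonpos (convex_Icc 0 T)
    · exact fun t _ => ((hφd t).continuousAt).continuousWithinAt
    · exact fun t _ => ((hφd t).differentiableAt).differentiableWithinAt
    · intro t ht
      rw [interior_Icc] at ht
      rw [(hφd t).deriv]
      have hle : f t ≤ a + F t := h t ⟨le_of_lt ht.1, le_of_lt ht.2⟩
      have hexp : (0:ℝ) < Real.exp (-G t) := Real.exp_pos _
      nlinarith [hgpos t, hexp.le, mul_nonneg (hgpos t) hexp.le]
  have hφT : φ T ≤ φ 0 := hanti ⟨le_refl 0, hT⟩ ⟨hT, le_refl T⟩ hT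
  have hφ0 : φ 0 = a := by
    simp [hφ, hF, hG, intervalIntegral.integral_same]
  have key : a + F T ≤ a * Real.exp (G T) := by
    have hexp : (0:ℝ) < Real.exp (-G T) := Real.exp_pos _
    have := hφT
    rw [hφ0] at this
    have h2 : (a + F T) * Real.exp (-G T) * Real.exp (G T) ≤ a * Real.exp (G T) := by
      exact mul_le_mul_of_nonneg_right this (Real.exp_pos _).le
    rwa [mul_assoc, ← Real.exp_add, neg_add_cancel, Real.exp_zero, mul_one] at h2
  exact le_trans (h T ⟨hT, le_refl T⟩) key

theorem stmt_6 (M lam K B : ℝ) (hM : 0 < M) (hlam : 0 < lam) (hK : 0 < K) (hB : 0 ≤ B)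
    (x u ξ : ℝ → ℝ) (hx : Continuous x) (hu : Continuous u) (hξ : Continuous ξ)
    (hxpos : ∀ t, 0 ≤ x t) (hupos : ∀ t, 0 ≤ u t) (hξpos : ∀ t, 0 ≤ ξ t)
    (hineq : ∀ t : ℝ, 0 ≤ t →
      x t ≤ M * Real.exp (-lam * t) * x 0 +
        ∫ r in (0:ℝ)..t, M * Real.exp (-lam * (t - r)) * (B * u r + K * x r * ξ (u r))) :
    ∀ t : ℝ, 0 ≤ t →
      x t ≤ M * (Real.exp (-lam * t) * x 0 + B * ∫ r in (0:ℝ)..t, u r) *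
        Real.exp (∫ r in (0:ℝ)..t, M * K * ξ (u r)) := by
  intro T hT
  -- f t = e^{lam t} x t, g t = M K ξ (u t)
  set f : ℝ → ℝ := fun t => Real.exp (lam * t) * x t with hf
  set g : ℝ → ℝ := fun t => M * K * ξ (u t) with hg
  have hfc : Continuous f := (Real.continuous_exp.comp (continuous_const.mul continuous_id)).mul hx
  have hgc : Continuous g := continuous_const.mul (hξ.comp hu)
  have hgpos : ∀ t, 0 ≤ g t := fun t =>
    mul_nonneg (mul_nonneg hM.le hK.le) (hξpos _)
  set a : ℝ := M * x 0 + M * B * ∫ r in (0:ℝ)..T, Real.exp (lam * r) * u r with ha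
  have hEuc : Continuous (fun r => Real.exp (lam * r) * u r) :=
    (Real.continuous_exp.comp (continuous_const.mul continuous_id)).mul hu
  have hupos' : ∀ s t : ℝ, s ≤ t → 0 ≤ ∫ r in s..t, Real.exp (lam * r) * u r := by
    intro s t hst
    apply intervalIntegral.integral_nonneg hst
    intro r _
    exact mul_nonneg (Real.exp_pos _).le (hupos r)
  have hanonneg : 0 ≤ a := by
    have h0 := hupos' 0 T hT
    have := mul_nonneg (mul_nonneg hM.le hB) h0
    nlinarith [mul_nonneg hM.le (hxpos 0)]
  -- key hypothesis transformation
  have hkey : ∀ t ∈ Set.Icc (0:ℝ) T, f t ≤ a + ∫ r in (0:ℝ)..t, g r * f r := by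
    intro t ht
    have h1 := hineq t ht.1
    have hmul := mul_le_mul_of_nonneg_left h1 (Real.exp_pos (lam * t)).le
    have heq : Real.exp (lam * t) * (M * Real.exp (-lam * t) * x 0 +
        ∫ r in (0:ℝ)..t, M * Real.exp (-lam * (t - r)) * (B * u r + K * x r * ξ (u r)))
        = M * x 0 + ∫ r in (0:ℝ)..t,
          (M * B * (Real.exp (lam * r) * u r) + g r * f r) := by
      rw [mul_add, ← intervalIntegral.integral_const_mul]
      congr 1
      · have he : Real.exp (lam * t) * Real.exp (-lam * t) = 1 := by
          rw [← Real.exp_add, show lam * t + -lam * t = 0 by ring, Real.exp_zero]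
        linear_combination (M * x 0) * he
      · apply intervalIntegral.integral_congr
        intro r _
        simp only [hg, hf]
        have he : Real.exp (lam * t) * Real.exp (-lam * (t - r)) = Real.exp (lam * r) := by
          rw [← Real.exp_add, show lam * t + -lam * (t - r) = lam * r by ring]
        linear_combination M * (B * u r + K * x r * ξ (u r)) * he
    rw [heq] at hmul
    have hsplit : (∫ r in (0:ℝ)..t, (M * B * (Real.exp (lam * r) * u r) + g r * f r))
        = (M * B * ∫ r in (0:ℝ)..t, Real.exp (lam * r) * u r) + ∫ r in (0:ℝ)..t, g r * f r := by
      rw [intervalIntegral.integral_add, intervalIntegral.integral_const_mul]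
      · exact (continuous_const.mul hEuc).intervalIntegrable 0 t
      · exact (hgc.mul hfc).intervalIntegrable 0 t
    rw [hsplit] at hmul
    have hmono : (∫ r in (0:ℝ)..t, Real.exp (lam * r) * u r)
        ≤ ∫ r in (0:ℝ)..T, Real.exp (lam * r) * u r := by
      have := intervalIntegral.integral_add_adjacent_intervals (μ := MeasureTheory.volume)
        (hEuc.intervalIntegrable 0 t) (hEuc.intervalIntegrable t T)
      rw [← this]
      have := hupos' t T ht.2
      linarith
    calc f t ≤ M * x 0 + ((M * B * ∫ r in (0:ℝ)..t, Real.exp (lam * r) * u r)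
          + ∫ r in (0:ℝ)..t, g r * f r) := hmul
      _ ≤ a + ∫ r in (0:ℝ)..t, g r * f r := by
          have : M * B * (∫ r in (0:ℝ)..t, Real.exp (lam * r) * u r)
              ≤ M * B * ∫ r in (0:ℝ)..T, Real.exp (lam * r) * u r :=
            mul_le_mul_of_nonneg_left hmono (mul_nonneg hM.le hB)
          simp only [ha]; linarith
  have hgron := gronwall_int g f hgc hfc hgpos a T hanonneg hT hkey
  -- now convert back
  have hxT : x T = Real.exp (-lam * T) * f T := by
    simp only [hf]
    have he : Real.exp (-lam * T) * Real.exp (lam * T) = 1 := by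
      rw [← Real.exp_add, show -lam * T + lam * T = 0 by ring, Real.exp_zero]
    linear_combination (-(x T)) * he
  rw [hxT]
  have step1 : Real.exp (-lam * T) * f T
      ≤ Real.exp (-lam * T) * (a * Real.exp (∫ r in (0:ℝ)..T, g r)) :=
    mul_le_mul_of_nonneg_left hgron (Real.exp_pos _).le
  refine le_trans step1 ?_
  have hgint : (∫ r in (0:ℝ)..T, g r) = ∫ r in (0:ℝ)..T, M * K * ξ (u r) := rfl
  rw [hgint, ← mul_assoc]
  apply mul_le_mul_of_nonneg_right _ (Real.exp_pos _).le
  -- e^{-lam T} * a ≤ M * (e^{-lam T} x 0 + B ∫ u)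
  have hint_le : Real.exp (-lam * T) * (∫ r in (0:ℝ)..T, Real.exp (lam * r) * u r)
      ≤ ∫ r in (0:ℝ)..T, u r := by
    rw [← intervalIntegral.integral_const_mul]
    apply intervalIntegral.integral_mono_on hT
    · exact (continuous_const.mul hEuc).intervalIntegrable 0 T
    · exact hu.intervalIntegrable 0 T
    · intro r hr
      have h1 : Real.exp (-lam * T) * (Real.exp (lam * r) * u r)
          = Real.exp (lam * (r - T)) * u r := by
        rw [← mul_assoc, ← Real.exp_add]; ring_nf
      rw [h1]
      have h2 : Real.exp (lam * (r - T)) ≤ 1 := by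
        rw [Real.exp_le_one_iff]
        have : r - T ≤ 0 := by linarith [hr.2]
        nlinarith
      nlinarith [hupos r, Real.exp_pos (lam * (r - T))]
  have expand : Real.exp (-lam * T) * a = M * Real.exp (-lam * T) * x 0
      + M * B * (Real.exp (-lam * T) * ∫ r in (0:ℝ)..T, Real.exp (lam * r) * u r) := by
    simp only [ha]; ring
  rw [expand]
  have h3 : M * B * (Real.exp (-lam * T) * ∫ r in (0:ℝ)..T, Real.exp (lam * r) * u r)
      ≤ M * B * ∫ r in (0:ℝ)..T, u r :=
    mul_le_mul_of_nonneg_left hint_le (mul_nonneg hM.le hB)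
  nlinarith [h3]
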